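/- Suppose a set L of axis-parallel lines, containing at most c vertical lines and at most r horizontal lines, hits every segment induced by the set of centers of n unit squares in an initial layout. Then for every ε > 0 there exists a disjoint layout of the n unit squares preserving the orthogonal order of the initial layout whose bounding box has width at most c + 1 + ε and height at most r + 1 + ε. -/
import Mathlib

open scoped Classical

/-- An axis-parallel line in the plane: `vert a` is the line `x = a`,
`horiz b` is the line `y = b`. -/
inductive ALine where
  | vert : ℝ → ALine
  | horiz : ℝ → ALine

/-- `a` lies strictly between `u` and `v`. -/
def strictBetween (a u v : ℝ) : Prop := (u < a ∧ a < v) ∨ (v < a ∧ a < u)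

/-- An axis-parallel line hits the segment joining `p` and `q` iff it meets the
relative interior of the segment but neither endpoint. -/
def ALine.hits : ALine → ℝ × ℝ → ℝ × ℝ → Prop
  | .vert a, p, q => strictBetween a p.1 q.1
  | .horiz b, p, q => strictBetween b p.2 q.2

/-- The line contains the point `p`. -/
def ALine.containsPt : ALine → ℝ × ℝ → Prop
  | .vert a, p => p.1 = a
  | .horiz b, p => p.2 = b

/-- The line is vertical. -/
def ALine.isVert : ALine → Prop
  | .vert _ => True
  | .horiz _ => False

/-- The line is horizontal. -/
def ALine.isHoriz : ALine → Prop
  | .vert _ => False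
  | .horiz _ => True

/-- Two layouts (assignments of centers to the items indexed by `ι`) have the
same orthogonal order. -/
def orthOrder {ι : Type*} (f g : ι → ℝ × ℝ) : Prop :=
  ∀ i j : ι,
    ((f i).1 < (f j).1 ↔ (g i).1 < (g j).1) ∧
    ((f i).1 = (f j).1 ↔ (g i).1 = (g j).1) ∧
    ((f i).2 < (f j).2 ↔ (g i).2 < (g j).2) ∧
    ((f i).2 = (f j).2 ↔ (g i).2 = (g j).2)

/-- A layout of unit squares is disjoint iff any two distinct centers are at
distance at least 1 in the `x`- or the `y`-coordinate. -/
def disjointUnitLayout {ι : Type*} (f : ι → ℝ × ℝ) : Prop :=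
  ∀ i j : ι, i ≠ j → 1 ≤ |(f i).1 - (f j).1| ∨ 1 ≤ |(f i).2 - (f j).2|

/-- Width of the bounding box of a layout of unit squares. -/
noncomputable def unitWidth {n : ℕ} (f : Fin n → ℝ × ℝ) : ℝ :=
  (⨆ i, (f i).1) - (⨅ i, (f i).1) + 1

/-- Height of the bounding box of a layout of unit squares. -/
noncomputable def unitHeight {n : ℕ} (f : Fin n → ℝ × ℝ) : ℝ :=
  (⨆ i, (f i).2) - (⨅ i, (f i).2) + 1

/-! ### Auxiliary material -/

/-- A strictly monotone squashing map `ℝ → (0,1)`. -/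
noncomputable def sqsh (x : ℝ) : ℝ := Real.arctan x / Real.pi + 1/2

lemma sqsh_strictMono : StrictMono sqsh := by
  intro x y h
  unfold sqsh
  have := Real.arctan_strictMono h
  have hpi := Real.pi_pos
  gcongr

lemma sqsh_pos (x : ℝ) : 0 < sqsh x := by
  have h1 := Real.neg_pi_div_two_lt_arctan x
  have hpi := Real.pi_pos
  have : -(1/2) < Real.arctan x / Real.pi := by
    rw [lt_div_iff₀ hpi]; nlinarith
  unfold sqsh; linarith

lemma sqsh_lt_one (x : ℝ) : sqsh x < 1 := by
  have h1 := Real.arctan_lt_pi_div_two x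
  have hpi := Real.pi_pos
  have : Real.arctan x / Real.pi < 1/2 := by
    rw [div_lt_iff₀ hpi]; nlinarith
  unfold sqsh; linarith

/-- `l` is a vertical line lying strictly to the left of abscissa `x`. -/
def vBelow (x : ℝ) : ALine → Prop
  | .vert a => a < x
  | .horiz _ => False

/-- `l` is a horizontal line lying strictly below ordinate `y`. -/
def hBelow (y : ℝ) : ALine → Prop
  | .horiz b => b < y
  | .vert _ => False

lemma vBelow_subset (L : Finset ALine) {x y : ℝ} (h : x ≤ y) :
    L.filter (vBelow x) ⊆ L.filter (vBelow y) := by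
  intro l hl
  simp only [Finset.mem_filter] at hl ⊢
  refine ⟨hl.1, ?_⟩
  cases l with
  | vert a => simp only [vBelow] at hl ⊢; linarith [hl.2]
  | horiz b => simp only [vBelow] at hl; exact hl.2.elim

lemma hBelow_subset (L : Finset ALine) {x y : ℝ} (h : x ≤ y) :
    L.filter (hBelow x) ⊆ L.filter (hBelow y) := by
  intro l hl
  simp only [Finset.mem_filter] at hl ⊢
  refine ⟨hl.1, ?_⟩
  cases l with
  | horiz b => simp only [hBelow] at hl ⊢; linarith [hl.2]
  | vert a => simp only [hBelow] at hl; exact hl.2.elim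

lemma vBelow_card_mono (L : Finset ALine) {x y : ℝ} (h : x ≤ y) :
    (L.filter (vBelow x)).card ≤ (L.filter (vBelow y)).card :=
  Finset.card_le_card (vBelow_subset L h)

lemma hBelow_card_mono (L : Finset ALine) {x y : ℝ} (h : x ≤ y) :
    (L.filter (hBelow x)).card ≤ (L.filter (hBelow y)).card :=
  Finset.card_le_card (hBelow_subset L h)

lemma vBelow_card_strict (L : Finset ALine) {a x y : ℝ}
    (hl : ALine.vert a ∈ L) (h1 : x < a) (h2 : a < y) :
    (L.filter (vBelow x)).card < (L.filter (vBelow y)).card := by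
  apply Finset.card_lt_card
  rw [Finset.ssubset_iff_of_subset (vBelow_subset L (le_of_lt (lt_trans h1 h2)))]
  refine ⟨ALine.vert a, ?_, ?_⟩
  · simp only [Finset.mem_filter]; exact ⟨hl, h2⟩
  · simp only [Finset.mem_filter, vBelow, not_and]
    intro _; linarith

lemma hBelow_card_strict (L : Finset ALine) {b x y : ℝ}
    (hl : ALine.horiz b ∈ L) (h1 : x < b) (h2 : b < y) :
    (L.filter (hBelow x)).card < (L.filter (hBelow y)).card := by
  apply Finset.card_lt_card
  rw [Finset.ssubset_iff_of_subset (hBelow_subset L (le_of_lt (lt_trans h1 h2)))]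
  refine ⟨ALine.horiz b, ?_, ?_⟩
  · simp only [Finset.mem_filter]; exact ⟨hl, h2⟩
  · simp only [Finset.mem_filter, hBelow, not_and]
    intro _; linarith

lemma vBelow_card_le (L : Finset ALine) (x : ℝ) :
    (L.filter (vBelow x)).card ≤ (L.filter ALine.isVert).card := by
  apply Finset.card_le_card
  intro l hl
  simp only [Finset.mem_filter] at hl ⊢
  refine ⟨hl.1, ?_⟩
  cases l with
  | vert a => trivial
  | horiz b => simp only [vBelow] at hl; exact hl.2.elim

lemma hBelow_card_le (L : Finset ALine) (y : ℝ) :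
    (L.filter (hBelow y)).card ≤ (L.filter ALine.isHoriz).card := by
  apply Finset.card_le_card
  intro l hl
  simp only [Finset.mem_filter] at hl ⊢
  refine ⟨hl.1, ?_⟩
  cases l with
  | horiz b => trivial
  | vert a => simp only [hBelow] at hl; exact hl.2.elim

/-- a hitting set with at most `c` vertical and at most `r`
horizontal lines for the segments induced by the centers of an initial layout
yields, for every `ε > 0`, a disjoint orthogonal-order preserving layout of
width at most `c + 1 + ε` and height at most `r + 1 + ε`. -/
theorem stmt3 (n : ℕ) (lay0 : Fin n → ℝ × ℝ) (hinj : Function.Injective lay0)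
    (L : Finset ALine) (c r : ℕ)
    (hc : (L.filter ALine.isVert).card ≤ c)
    (hr : (L.filter ALine.isHoriz).card ≤ r)
    (hhit : ∀ i j : Fin n, i ≠ j → ∃ l ∈ L, l.hits (lay0 i) (lay0 j)) :
    ∀ ε : ℝ, 0 < ε → ∃ lay' : Fin n → ℝ × ℝ,
      disjointUnitLayout lay' ∧ orthOrder lay0 lay' ∧
      unitWidth lay' ≤ (c : ℝ) + 1 + ε ∧ unitHeight lay' ≤ (r : ℝ) + 1 + ε := by
  intro ε hε
  have hcrpos : (0:ℝ) < (c : ℝ) + (r : ℝ) + 1 := by positivity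
  set δ : ℝ := ε / ((c : ℝ) + (r : ℝ) + 1) with hδdef
  have hδ : 0 < δ := div_pos hε hcrpos
  set fX : ℝ → ℝ := fun x => (1 + δ) * ((L.filter (vBelow x)).card : ℝ) + δ * sqsh x
    with hfXdef
  set fY : ℝ → ℝ := fun y => (1 + δ) * ((L.filter (hBelow y)).card : ℝ) + δ * sqsh y
    with hfYdef
  have hfXmono : StrictMono fX := by
    intro x y h
    have h1 : ((L.filter (vBelow x)).card : ℝ) ≤ ((L.filter (vBelow y)).card : ℝ) := by
      exact_mod_cast vBelow_card_mono L h.le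
    have h2 := sqsh_strictMono h
    simp only [hfXdef]
    nlinarith
  have hfYmono : StrictMono fY := by
    intro x y h
    have h1 : ((L.filter (hBelow x)).card : ℝ) ≤ ((L.filter (hBelow y)).card : ℝ) := by
      exact_mod_cast hBelow_card_mono L h.le
    have h2 := sqsh_strictMono h
    simp only [hfYdef]
    nlinarith
  have keyX : ∀ u v : ℝ, (L.filter (vBelow u)).card < (L.filter (vBelow v)).card →
      1 ≤ fX v - fX u := by
    intro u v h
    have h1 : ((L.filter (vBelow u)).card : ℝ) + 1 ≤ ((L.filter (vBelow v)).card : ℝ) := by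
      exact_mod_cast h
    have h2 := sqsh_pos u
    have h3 := sqsh_lt_one v
    have h4 := sqsh_pos v
    have h5 := sqsh_lt_one u
    simp only [hfXdef]
    nlinarith
  have keyY : ∀ u v : ℝ, (L.filter (hBelow u)).card < (L.filter (hBelow v)).card →
      1 ≤ fY v - fY u := by
    intro u v h
    have h1 : ((L.filter (hBelow u)).card : ℝ) + 1 ≤ ((L.filter (hBelow v)).card : ℝ) := by
      exact_mod_cast h
    have h2 := sqsh_pos u
    have h3 := sqsh_lt_one v
    have h4 := sqsh_pos v
    have h5 := sqsh_lt_one u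
    simp only [hfYdef]
    nlinarith
  refine ⟨fun i => (fX (lay0 i).1, fY (lay0 i).2), ?_, ?_, ?_, ?_⟩
  · -- disjointness
    intro i j hij
    obtain ⟨l, hlL, hhits⟩ := hhit i j hij
    cases l with
    | vert a =>
      left
      simp only [ALine.hits, strictBetween] at hhits
      rcases hhits with ⟨h1, h2⟩ | ⟨h1, h2⟩
      · have := keyX _ _ (vBelow_card_strict L hlL h1 h2)
        rw [abs_sub_comm]
        exact le_trans this (le_abs_self _)
      · have := keyX _ _ (vBelow_card_strict L hlL h1 h2)
        exact le_trans this (le_abs_self _)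
    | horiz b =>
      right
      simp only [ALine.hits, strictBetween] at hhits
      rcases hhits with ⟨h1, h2⟩ | ⟨h1, h2⟩
      · have := keyY _ _ (hBelow_card_strict L hlL h1 h2)
        rw [abs_sub_comm]
        exact le_trans this (le_abs_self _)
      · have := keyY _ _ (hBelow_card_strict L hlL h1 h2)
        exact le_trans this (le_abs_self _)
  · -- orthogonal order
    intro i j
    refine ⟨(hfXmono.lt_iff_lt).symm, ?_, (hfYmono.lt_iff_lt).symm, ?_⟩
    · exact ⟨fun h => congrArg fX h, fun h => hfXmono.injective h⟩
    · exact ⟨fun h => congrArg fY h, fun h => hfYmono.injective h⟩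
  · -- width
    rcases Nat.eq_zero_or_pos n with h0 | hn
    · subst h0
      haveI : IsEmpty (Fin 0) := inferInstance
      unfold unitWidth
      simp only
      rw [Real.iSup_of_isEmpty, Real.iInf_of_isEmpty]
      have : (0:ℝ) ≤ c := by positivity
      linarith
    · haveI : Nonempty (Fin n) := ⟨⟨0, hn⟩⟩
      have hub : ∀ i : Fin n, fX (lay0 i).1 ≤ (1 + δ) * c + δ := by
        intro i
        have h1 : ((L.filter (vBelow (lay0 i).1)).card : ℝ) ≤ (c : ℝ) := by
          exact_mod_cast le_trans (vBelow_card_le L _) hc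
        have h2 := sqsh_lt_one (lay0 i).1
        simp only [hfXdef]
        nlinarith
      have hlb : ∀ i : Fin n, (0:ℝ) ≤ fX (lay0 i).1 := by
        intro i
        have h1 : (0:ℝ) ≤ ((L.filter (vBelow (lay0 i).1)).card : ℝ) := by positivity
        have h2 := sqsh_pos (lay0 i).1
        simp only [hfXdef]
        nlinarith
      unfold unitWidth
      simp only
      have hsup : (⨆ i : Fin n, fX (lay0 i).1) ≤ (1 + δ) * c + δ := ciSup_le hub
      have hinf : (0:ℝ) ≤ ⨅ i : Fin n, fX (lay0 i).1 := le_ciInf hlb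
      have hδc : δ * ((c : ℝ) + 1) ≤ ε := by
        rw [hδdef, div_mul_eq_mul_div, div_le_iff₀ hcrpos]
        have hr0 : (0:ℝ) ≤ (r : ℝ) := Nat.cast_nonneg r
        have : (c : ℝ) + 1 ≤ (c : ℝ) + (r : ℝ) + 1 := by linarith
        nlinarith
      nlinarith
  · -- height
    rcases Nat.eq_zero_or_pos n with h0 | hn
    · subst h0
      haveI : IsEmpty (Fin 0) := inferInstance
      unfold unitHeight
      simp only
      rw [Real.iSup_of_isEmpty, Real.iInf_of_isEmpty]
      have : (0:ℝ) ≤ r := by positivity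
      linarith
    · haveI : Nonempty (Fin n) := ⟨⟨0, hn⟩⟩
      have hub : ∀ i : Fin n, fY (lay0 i).2 ≤ (1 + δ) * r + δ := by
        intro i
        have h1 : ((L.filter (hBelow (lay0 i).2)).card : ℝ) ≤ (r : ℝ) := by
          exact_mod_cast le_trans (hBelow_card_le L _) hr
        have h2 := sqsh_lt_one (lay0 i).2
        simp only [hfYdef]
        nlinarith
      have hlb : ∀ i : Fin n, (0:ℝ) ≤ fY (lay0 i).2 := by
        intro i
        have h1 : (0:ℝ) ≤ ((L.filter (hBelow (lay0 i).2)).card : ℝ) := by positivity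
        have h2 := sqsh_pos (lay0 i).2
        simp only [hfYdef]
        nlinarith
      unfold unitHeight
      simp only
      have hsup : (⨆ i : Fin n, fY (lay0 i).2) ≤ (1 + δ) * r + δ := ciSup_le hub
      have hinf : (0:ℝ) ≤ ⨅ i : Fin n, fY (lay0 i).2 := le_ciInf hlb
      have hδr : δ * ((r : ℝ) + 1) ≤ ε := by
        rw [hδdef, div_mul_eq_mul_div, div_le_iff₀ hcrpos]
        have hc0 : (0:ℝ) ≤ (c : ℝ) := Nat.cast_nonneg c
        have : (r : ℝ) + 1 ≤ (c : ℝ) + (r : ℝ) + 1 := by linarith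
        nlinarith
      nlinarith
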